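/- arXiv:1901.10715 — 3 statements merged into one kernel-verified Lean document; each statement's English description precedes it below -/
import Mathlib

section
/- Let $\Omega \subset \mathbb{R}^3$ be a bounded Lipschitz domain. There is a constant $C>0$ such that for all $u, \tilde u \in H_0^1(\Omega)$: $\|\tilde u^3 - u^3 - 3u^2(\tilde u - u)\|_{H^{-1}(\Omega)} \leq C\, \|\tilde u - u\|_{L^2(\Omega)}\, \|\tilde u - u\|_{H_0^1(\Omega)}\, (\|u\|_{H_0^1(\Omega)} + \|\tilde u\|_{H_0^1(\Omega)})$. Consequently, on any bounded set of $H_0^1(\Omega)$, the first-order Taylor remainder of $\Phi(u) = u^3$ is bounded in $H^{-1}$ by a small multiple of $\|\tilde u - u\|_{L^2}$ when $\|\tilde u - u\|_{H_0^1}$ is small (tangential cone estimate). -/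
/-!
The remainder factors as `(ũ - u)² (ũ + 2u)`, so against a test function `w` it is the integral
of a product of four functions. Hölder with `1 = 1/2 + 1/6 + 1/6 + 1/6` bounds it by
`‖ũ - u‖_{L²} ‖ũ - u‖_{L⁶} ‖ũ + 2u‖_{L⁶} ‖w‖_{L⁶}`, and the embedding `H₀¹ ↪ L⁶` turns the
three `L⁶` norms into `H₀¹` norms.
-/

open MeasureTheory

instance : ENNReal.HolderTriple 6 6 3 := ⟨by
  rw [← ENNReal.toReal_eq_toReal_iff' (by simp) (by simp), ENNReal.toReal_add (by simp) (by simp)]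
  norm_num⟩
instance : ENNReal.HolderTriple 6 3 2 := ⟨by
  rw [← ENNReal.toReal_eq_toReal_iff' (by simp) (by simp), ENNReal.toReal_add (by simp) (by simp)]
  norm_num⟩

section LpEstimates

variable {α : Type*} [MeasurableSpace α] {μ : Measure α}

lemma lpNorm_pow_eq_integral_abs_pow {f : α → ℝ} (hf : AEStronglyMeasurable f μ) {n : ℕ}
    (hn : n ≠ 0) : lpNorm f n μ ^ n = ∫ x, |f x| ^ n ∂μ := by
  have h := eLpNorm_nnreal_pow_eq_lintegral (μ := μ) (f := f) (p := n) (by simpa using hn)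
  simp only [NNReal.coe_natCast, ENNReal.rpow_natCast, ENNReal.coe_natCast] at h
  rw [← toReal_eLpNorm hf, ← ENNReal.toReal_pow, h, integral_eq_lintegral_of_nonneg_ae
    (ae_of_all _ fun x => by positivity) (hf.aemeasurable.abs.pow_const n).aestronglyMeasurable]
  congr 1
  refine lintegral_congr fun x => ?_
  rw [ENNReal.ofReal_pow (abs_nonneg _), Real.enorm_eq_ofReal_abs]

lemma lpNorm_le_of_integral_abs_pow_le {f : α → ℝ} (hf : AEStronglyMeasurable f μ) {n : ℕ}
    (hn : n ≠ 0) {K : ℝ} (hK : 0 ≤ K) (hfK : ∫ x, |f x| ^ n ∂μ ≤ K ^ n) : lpNorm f n μ ≤ K := by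
  rw [← pow_le_pow_iff_left₀ lpNorm_nonneg hK hn, lpNorm_pow_eq_integral_abs_pow hf hn]
  exact hfK

lemma lpNorm_two_eq_sqrt_integral_sq {f : α → ℝ} (hf : AEStronglyMeasurable f μ) :
    lpNorm f 2 μ = √(∫ x, f x ^ 2 ∂μ) := by
  have h := lpNorm_pow_eq_integral_abs_pow hf two_ne_zero
  simp only [sq_abs, Nat.cast_ofNat] at h
  rw [← h, Real.sqrt_sq lpNorm_nonneg]

lemma memLp_of_integrable_abs_pow {f : α → ℝ} (hf : AEStronglyMeasurable f μ) {n : ℕ}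
    (hn : n ≠ 0) (hfn : Integrable (fun x => |f x| ^ n) μ) : MemLp f n μ := by
  rw [← integrable_norm_rpow_iff hf (by simpa using hn) (by simp)]
  simpa [Real.norm_eq_abs] using hfn

lemma abs_integral_mul_le_lpNorm {f g h k : α → ℝ} (hf : MemLp f 2 μ) (hg : MemLp g 6 μ)
    (hh : MemLp h 6 μ) (hk : MemLp k 6 μ) :
    |∫ x, f x * g x * h x * k x ∂μ|
      ≤ lpNorm f 2 μ * lpNorm g 6 μ * lpNorm h 6 μ * lpNorm k 6 μ := by
  have hhk : eLpNorm (h * k) 3 μ ≤ eLpNorm h 6 μ * eLpNorm k 6 μ :=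
    (eLpNorm_smul_le_mul_eLpNorm (p := 6) (q := 6) (r := 3) (μ := μ) hk.1 hh.1 :)
  have hghk : eLpNorm (g * (h * k)) 2 μ ≤ eLpNorm g 6 μ * eLpNorm (h * k) 3 μ :=
    (eLpNorm_smul_le_mul_eLpNorm (p := 6) (q := 3) (r := 2) (μ := μ) (hh.1.mul hk.1) hg.1 :)
  have hfghk : eLpNorm (f * (g * (h * k))) 1 μ ≤ eLpNorm f 2 μ * eLpNorm (g * (h * k)) 2 μ :=
    (eLpNorm_smul_le_mul_eLpNorm (p := 2) (q := 2) (r := 1) (μ := μ)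
      (hg.1.mul (hh.1.mul hk.1)) hf.1 :)
  have hF : AEStronglyMeasurable (f * (g * (h * k))) μ := hf.1.mul (hg.1.mul (hh.1.mul hk.1))
  calc |∫ x, f x * g x * h x * k x ∂μ| ≤ ∫ x, ‖(f * (g * (h * k))) x‖ ∂μ := by
        simpa only [Pi.mul_apply, mul_assoc, Real.norm_eq_abs] using
          norm_integral_le_integral_norm (μ := μ) (f * (g * (h * k)))
    _ = lpNorm (f * (g * (h * k))) 1 μ := (lpNorm_one_eq_integral_norm hF).symm
    _ ≤ lpNorm f 2 μ * lpNorm g 6 μ * lpNorm h 6 μ * lpNorm k 6 μ := by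
        simp only [← toReal_eLpNorm hF, ← toReal_eLpNorm hf.1, ← toReal_eLpNorm hg.1,
          ← toReal_eLpNorm hh.1, ← toReal_eLpNorm hk.1, ← ENNReal.toReal_mul]
        refine ENNReal.toReal_mono (by finiteness [hf.2.ne, hg.2.ne, hh.2.ne, hk.2.ne]) ?_
        calc _ ≤ eLpNorm f 2 μ * eLpNorm (g * (h * k)) 2 μ := hfghk
          _ ≤ eLpNorm f 2 μ * (eLpNorm g 6 μ * eLpNorm (h * k) 3 μ) := by gcongr
          _ ≤ eLpNorm f 2 μ * (eLpNorm g 6 μ * (eLpNorm h 6 μ * eLpNorm k 6 μ)) := by gcongr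
          _ = _ := by rw [← mul_assoc, ← mul_assoc]

lemma abs_integral_cubic_remainder_mul_le [IsFiniteMeasure μ] {f g w : α → ℝ}
    (hf : MemLp f 6 μ) (hg : MemLp g 6 μ) (hw : MemLp w 6 μ) :
    |∫ x, (g x ^ 3 - f x ^ 3 - 3 * f x ^ 2 * (g x - f x)) * w x ∂μ|
      ≤ √(∫ x, (g x - f x) ^ 2 ∂μ) * lpNorm (g - f) 6 μ * lpNorm (g + (2 : ℝ) • f) 6 μ
        * lpNorm w 6 μ := by
  have hd : MemLp (g - f) 6 μ := hg.sub hf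
  have hs : MemLp (g + (2 : ℝ) • f) 6 μ := hg.add (hf.const_smul (2 : ℝ))
  have hd2 : MemLp (g - f) 2 μ := hd.mono_exponent (by norm_num)
  have h := abs_integral_mul_le_lpNorm hd2 hd hs hw
  rw [lpNorm_two_eq_sqrt_integral_sq hd.1] at h
  simp only [Pi.sub_apply, Pi.add_apply, Pi.smul_apply, smul_eq_mul] at h
  convert h using 4 with x
  ring

end LpEstimates

theorem stmt_7_general
    {α : Type*} [MeasurableSpace α] (μ : Measure α) [IsFiniteMeasure μ]
    {V : Type*} [NormedAddCommGroup V] [InnerProductSpace ℝ V]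
    (ι : V →ₗ[ℝ] (α → ℝ))
    (hmeas : ∀ v : V, AEStronglyMeasurable (ι v) μ)
    (hint6 : ∀ v : V, Integrable (fun x => |ι v x| ^ (6:ℕ)) μ)
    (C₆ : ℝ) (hC₆ : 0 < C₆)
    (hemb : ∀ v : V, ∫ x, |ι v x| ^ (6:ℕ) ∂μ ≤ (C₆ * ‖v‖) ^ (6:ℕ)) :
    ∃ C > (0:ℝ), ∀ u u' w : V, ‖w‖ ≤ 1 →
      |∫ x, ((ι u' x) ^ 3 - (ι u x) ^ 3 - 3 * (ι u x) ^ 2 * (ι u' x - ι u x)) * ι w x ∂μ|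
        ≤ C * Real.sqrt (∫ x, (ι u' x - ι u x) ^ 2 ∂μ) * ‖u' - u‖ * (‖u‖ + ‖u'‖) := by
  have hL6 (v : V) : MemLp (ι v) 6 μ := by
    simpa using memLp_of_integrable_abs_pow (hmeas v) (by norm_num) (hint6 v)
  have hL6_le (v : V) : lpNorm (ι v) 6 μ ≤ C₆ * ‖v‖ := by
    simpa using lpNorm_le_of_integral_abs_pow_le (hmeas v) (by norm_num) (by positivity) (hemb v)
  refine ⟨2 * C₆ ^ 3, by positivity, fun u u' w hw => ?_⟩
  have hsum : ‖u' + (2 : ℝ) • u‖ ≤ 2 * (‖u‖ + ‖u'‖) := by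
    calc ‖u' + (2 : ℝ) • u‖ ≤ ‖u'‖ + 2 * ‖u‖ := by
          simpa [norm_smul] using norm_add_le u' ((2 : ℝ) • u)
      _ ≤ 2 * (‖u‖ + ‖u'‖) := by linarith [norm_nonneg u']
  calc _ ≤ √(∫ x, (ι u' x - ι u x) ^ 2 ∂μ) * lpNorm (ι (u' - u)) 6 μ
          * lpNorm (ι (u' + (2 : ℝ) • u)) 6 μ * lpNorm (ι w) 6 μ := by
        simpa only [map_sub, map_add, map_smul] using
          abs_integral_cubic_remainder_mul_le (hL6 u) (hL6 u') (hL6 w)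
    _ ≤ √(∫ x, (ι u' x - ι u x) ^ 2 ∂μ) * (C₆ * ‖u' - u‖)
          * (C₆ * (2 * (‖u‖ + ‖u'‖))) * (C₆ * 1) := by
        have hs : lpNorm (ι (u' + (2 : ℝ) • u)) 6 μ ≤ C₆ * (2 * (‖u‖ + ‖u'‖)) :=
          (hL6_le _).trans (by gcongr)
        have hw6 : lpNorm (ι w) 6 μ ≤ C₆ * 1 := (hL6_le w).trans (by gcongr)
        gcongr ?_ * ?_ * ?_ * ?_ <;> first | exact hL6_le _ | assumption | exact lpNorm_nonneg
    _ = _ := by ring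

/-- Tangential cone estimate for `Φ(u) = u³` on `H₀¹(Ω)`,
`Ω ⊂ ℝ³` bounded Lipschitz: the first-order Taylor remainder satisfies
`‖u'³ - u³ - 3u²(u'-u)‖_{H⁻¹} ≤ C ‖u'-u‖_{L²} ‖u'-u‖_{H₀¹} (‖u‖ + ‖u'‖)`.
`V` abstracts `H₀¹(Ω)` realized via `ι`; `hemb` encodes `H¹ ↪ L⁶`; the `H⁻¹`
bound is expressed via pairing with unit-ball test functions `w`. -/
theorem stmt_7
    {α : Type*} [MeasurableSpace α] (μ : Measure α) [IsFiniteMeasure μ]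
    {V : Type*} [NormedAddCommGroup V] [InnerProductSpace ℝ V] [CompleteSpace V]
    (ι : V →ₗ[ℝ] (α → ℝ))
    (hmeas : ∀ v : V, AEStronglyMeasurable (ι v) μ)
    (hint6 : ∀ v : V, Integrable (fun x => |ι v x| ^ (6:ℕ)) μ)
    (C₆ : ℝ) (hC₆ : 0 < C₆)
    (hemb : ∀ v : V, ∫ x, |ι v x| ^ (6:ℕ) ∂μ ≤ (C₆ * ‖v‖) ^ (6:ℕ)) :
    ∃ C > (0:ℝ), ∀ u u' w : V, ‖w‖ ≤ 1 →
      |∫ x, ((ι u' x) ^ 3 - (ι u x) ^ 3 - 3 * (ι u x) ^ 2 * (ι u' x - ι u x)) * ι w x ∂μ|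
        ≤ C * Real.sqrt (∫ x, (ι u' x - ι u x) ^ 2 ∂μ) * ‖u' - u‖ * (‖u‖ + ‖u'‖) :=
  stmt_7_general μ ι hmeas hint6 C₆ hC₆ hemb
end

section
/- Let $V$ be a Hilbert space, $T > 0$, and $\mathcal U = H^1(0,T;V)$ with inner product $(u,v)_{\mathcal U} = \int_0^T (\dot u, \dot v)_V\,dt + (u(0), v(0))_V$. Let $\psi \in L^2(0,T;V)$ and define $u^z(t) = \int_0^T (t+1)\psi(s)\,ds - \int_0^t (t-s)\psi(s)\,ds$. Then $u^z \in \mathcal U$ and for every $v \in \mathcal U$, $(u^z, v)_{\mathcal U} = \int_0^T (\psi(t), v(t))_V\,dt$. (Explicit representation of the Riesz representer in $\mathcal U$ of the functional $v \mapsto \int_0^T (\psi(t), v(t))_V\,dt$.) -/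
/-!
Differentiating the formula gives `(u^z)'(t) = ∫ₜᵀ ψ`, a function vanishing at `T` whose value
at `0` is `u^z(0) = ∫₀ᵀ ψ`. Since `v` is only the primitive of an integrable `v'`, the
integration by parts `∫₀ᵀ ⟪∫ₜᵀ ψ, v'(t)⟫ dt = ∫₀ᵀ ⟪ψ(t), v(t) - v(0)⟫ dt` is done by Fubini on the
triangle `{s ≤ t}`; the boundary term at `0` is exactly `⟪u^z(0), v(0)⟫`.
-/

open MeasureTheory RealInnerProductSpace Set

section

variable {V : Type*} [NormedAddCommGroup V] [InnerProductSpace ℝ V] [CompleteSpace V]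

theorem intervalIntegral.integral_inner_const {f : ℝ → V} {a b : ℝ}
    (hf : IntervalIntegrable f volume a b) (c : V) :
    ∫ t in a..b, ⟪f t, c⟫ = ⟪∫ t in a..b, f t, c⟫ := by
  simp_rw [real_inner_comm c]
  exact (innerSL ℝ c).intervalIntegral_comp_comm hf

theorem intervalIntegral.integral_const_inner {f : ℝ → V} {a b : ℝ}
    (hf : IntervalIntegrable f volume a b) (c : V) :
    ∫ t in a..b, ⟪c, f t⟫ = ⟪c, ∫ t in a..b, f t⟫ :=
  (innerSL ℝ c).intervalIntegral_comp_comm hf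

theorem intervalIntegral.integral_indicator_Ici {E : Type*} [NormedAddCommGroup E]
    [NormedSpace ℝ E] {f : ℝ → E} {a b s : ℝ} (hs : s ∈ Ioc a b) :
    ∫ t in a..b, (Ici s).indicator f t = ∫ t in s..b, f t := by
  have hinter : Ici s ∩ Ioc a b = Icc s b :=
    ext fun t => ⟨fun ⟨hst, _, htb⟩ => ⟨hst, htb⟩, fun ⟨hst, htb⟩ => ⟨hst, hs.1.trans_le hst, htb⟩⟩
  rw [intervalIntegral.integral_of_le (hs.1.le.trans hs.2), intervalIntegral.integral_of_le hs.2,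
    MeasureTheory.integral_indicator measurableSet_Ici,
    Measure.restrict_restrict measurableSet_Ici, hinter, integral_Icc_eq_integral_Ioc]

theorem hasDerivAt_integral_sub_smul {ψ : ℝ → V} (hψ : Continuous ψ) (a t : ℝ) :
    HasDerivAt (fun u => ∫ s in a..u, (u - s) • ψ s) (∫ s in a..t, ψ s) t := by
  have hsψ : Continuous fun s : ℝ => s • ψ s := continuous_id.smul hψ
  have hsplit : (fun u => ∫ s in a..u, (u - s) • ψ s)
      = fun u => u • (∫ s in a..u, ψ s) - ∫ s in a..u, s • ψ s := by
    funext u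
    simp_rw [sub_smul]
    rw [intervalIntegral.integral_sub (f := fun s => u • ψ s)
      ((hψ.const_smul u).intervalIntegrable _ _) (hsψ.intervalIntegrable _ _),
      intervalIntegral.integral_smul]
  have hprim : HasDerivAt (fun u => ∫ s in a..u, ψ s) (ψ t) t :=
    hψ.integral_hasStrictDerivAt a t |>.hasDerivAt
  have hprim' : HasDerivAt (fun u => ∫ s in a..u, s • ψ s) (t • ψ t) t :=
    hsψ.integral_hasStrictDerivAt a t |>.hasDerivAt
  rw [hsplit]
  exact (((hasDerivAt_id t).smul hprim).sub hprim').congr_deriv (by simp)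

theorem intervalIntegral.integral_inner_primitive_eq {ψ g : ℝ → V} {a b : ℝ} (hab : a ≤ b)
    (hψ : IntervalIntegrable ψ volume a b) (hg : IntervalIntegrable g volume a b) :
    ∫ t in a..b, ⟪ψ t, ∫ s in a..t, g s⟫ = ∫ s in a..b, ⟪∫ t in s..b, ψ t, g s⟫ := by
  set G : ℝ × ℝ → ℝ := fun p => ⟪ψ p.1, g p.2⟫
  set F : ℝ → ℝ → ℝ := fun t s => {x | x ≤ t}.indicator (fun s => G (t, s)) s
  have hF : Function.uncurry F = {p : ℝ × ℝ | p.2 ≤ p.1}.indicator G := by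
    funext p
    simp only [Function.uncurry, F, indicator_apply, mem_ofPred_eq]
  have hG : IntegrableOn G (Ioc a b ×ˢ Ioc a b) := by
    rw [IntegrableOn, Measure.volume_eq_prod, ← Measure.prod_restrict]
    refine (hψ.1.norm.mul_prod hg.1.norm).mono' ?_ (.of_forall fun p => norm_inner_le_norm _ _)
    exact hψ.1.aestronglyMeasurable.comp_fst.inner hg.1.aestronglyMeasurable.comp_snd
  have hFint : IntegrableOn (Function.uncurry F) (uIoc a b ×ˢ uIoc a b) := by
    rw [hF, uIoc_of_le hab]
    exact hG.indicator (measurableSet_le measurable_snd measurable_fst)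
  calc ∫ t in a..b, ⟪ψ t, ∫ s in a..t, g s⟫ = ∫ t in a..b, ∫ s in a..b, F t s := by
        refine intervalIntegral.integral_congr fun t ht => ?_
        rw [uIcc_of_le hab] at ht
        have hgt : IntervalIntegrable g volume a t :=
          hg.mono_set (by rw [uIcc_of_le hab, uIcc_of_le ht.1]; exact Icc_subset_Icc_right ht.2)
        simp only [F, intervalIntegral.integral_indicator ht, G]
        exact (intervalIntegral.integral_const_inner hgt _).symm
    _ = ∫ s in a..b, ∫ t in a..b, F t s := intervalIntegral_intervalIntegral_swap hFint
    _ = ∫ s in a..b, ⟪∫ t in s..b, ψ t, g s⟫ := by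
        refine intervalIntegral.integral_congr_ae (.of_forall fun s hs => ?_)
        rw [uIoc_of_le hab] at hs
        have hψs : IntervalIntegrable ψ volume s b :=
          hψ.mono_set (by rw [uIcc_of_le hab, uIcc_of_le hs.2]; exact Icc_subset_Icc_left hs.1.le)
        have hFs : (fun t => F t s) = (Ici s).indicator (fun t => ⟪ψ t, g s⟫) := by
          funext t
          simp only [F, G, indicator_apply, mem_ofPred_eq, mem_Ici]
        rw [hFs, intervalIntegral.integral_indicator_Ici hs,
          intervalIntegral.integral_inner_const hψs]


theorem integral_inner_eq_of_eq_add_primitive {ψ v v' : ℝ → V} {a b : ℝ} (hab : a ≤ b)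
    (hψ : Continuous ψ) (hv' : IntervalIntegrable v' volume a b)
    (hv : ∀ t ∈ Icc a b, v t = v a + ∫ s in a..t, v' s) :
    ∫ t in a..b, ⟪ψ t, v t⟫
      = (∫ t in a..b, ⟪∫ s in t..b, ψ s, v' t⟫) + ⟪∫ s in a..b, ψ s, v a⟫ := by
  have hprim : ContinuousOn (fun t => ∫ s in a..t, v' s) (uIcc a b) :=
    intervalIntegral.continuousOn_primitive_interval' hv' left_mem_uIcc
  calc ∫ t in a..b, ⟪ψ t, v t⟫
      = ∫ t in a..b, (⟪ψ t, ∫ s in a..t, v' s⟫ + ⟪ψ t, v a⟫) := by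
        refine intervalIntegral.integral_congr fun t ht => ?_
        rw [uIcc_of_le hab] at ht
        simp only [hv t ht, inner_add_right, add_comm]
    _ = (∫ t in a..b, ⟪ψ t, ∫ s in a..t, v' s⟫) + ∫ t in a..b, ⟪ψ t, v a⟫ :=
        intervalIntegral.integral_add (hψ.continuousOn.inner hprim).intervalIntegrable
          ((hψ.inner continuous_const).intervalIntegrable a b)
    _ = (∫ t in a..b, ⟪∫ s in t..b, ψ s, v' t⟫) + ⟪∫ s in a..b, ψ s, v a⟫ := by
        rw [intervalIntegral.integral_inner_primitive_eq hab (hψ.intervalIntegrable a b) hv',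
          intervalIntegral.integral_inner_const (hψ.intervalIntegrable a b)]

end

theorem stmt_10_general
    {V : Type*} [NormedAddCommGroup V] [InnerProductSpace ℝ V] [CompleteSpace V]
    (T : ℝ) (hT : 0 < T) (ψ : ℝ → V) (hψ : Continuous ψ)
    (uz : ℝ → V)
    (huz : ∀ t : ℝ, uz t
      = ((∫ s in (0:ℝ)..T, (t + 1) • ψ s) - ∫ s in (0:ℝ)..t, (t - s) • ψ s))
    (v v' : ℝ → V)
    (hv'int : IntervalIntegrable v' MeasureTheory.volume 0 T)
    (hrep : ∀ t ∈ Set.Icc (0:ℝ) T, v t = v 0 + ∫ s in (0:ℝ)..t, v' s) :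
    (∀ t : ℝ, HasDerivAt uz ((∫ s in (0:ℝ)..T, ψ s) - ∫ s in (0:ℝ)..t, ψ s) t) ∧
    (∫ t in (0:ℝ)..T, ⟪(∫ s in (0:ℝ)..T, ψ s) - ∫ s in (0:ℝ)..t, ψ s, v' t⟫)
        + ⟪uz 0, v 0⟫
      = ∫ t in (0:ℝ)..T, ⟪ψ t, v t⟫ := by
  set C : V := ∫ s in (0:ℝ)..T, ψ s
  have huz' : uz = fun t => (t + 1) • C - ∫ s in (0:ℝ)..t, (t - s) • ψ s :=
    funext fun t => by rw [huz, intervalIntegral.integral_smul]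
  refine ⟨fun t => ?_, ?_⟩
  · rw [huz']
    exact ((((hasDerivAt_id t).add_const 1).smul_const C).sub
      (hasDerivAt_integral_sub_smul hψ 0 t)).congr_deriv (by simp)
  have htail : ∀ t, C - ∫ s in (0:ℝ)..t, ψ s = ∫ s in t..T, ψ s := fun t =>
    intervalIntegral.integral_interval_sub_left (hψ.intervalIntegrable 0 T)
      (hψ.intervalIntegrable 0 t)
  have huz0 : uz 0 = C := by simp [huz']
  simp_rw [htail, huz0]
  exact (integral_inner_eq_of_eq_add_primitive hT.le hψ hv'int hrep).symm

/-- Explicit Riesz representer in `𝒰 = H¹(0,T;V)` (with inner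
product `(u,v)_𝒰 = ∫₀ᵀ (u̇, v̇)_V dt + (u(0), v(0))_V`) of the functional
`v ↦ ∫₀ᵀ (ψ(t), v(t))_V dt`: with
`u^z(t) = ∫₀ᵀ (t+1) ψ(s) ds - ∫₀ᵗ (t-s) ψ(s) ds` one has `u^z ∈ 𝒰` with
derivative `(u^z)'(t) = ∫₀ᵀ ψ - ∫₀ᵗ ψ`, and `(u^z, v)_𝒰 = ∫₀ᵀ (ψ(t), v(t)) dt`
for every `v ∈ 𝒰` (represented by `(v, v')` with `v t = v 0 + ∫₀ᵗ v'`). -/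
theorem stmt_10
    {V : Type*} [NormedAddCommGroup V] [InnerProductSpace ℝ V] [CompleteSpace V]
    (T : ℝ) (hT : 0 < T) (ψ : ℝ → V) (hψ : Continuous ψ)
    (uz : ℝ → V)
    (huz : ∀ t : ℝ, uz t
      = ((∫ s in (0:ℝ)..T, (t + 1) • ψ s) - ∫ s in (0:ℝ)..t, (t - s) • ψ s))
    (v v' : ℝ → V)
    (hv'int : IntervalIntegrable v' MeasureTheory.volume 0 T)
    (hv'sq : IntervalIntegrable (fun s => ‖v' s‖ ^ 2) MeasureTheory.volume 0 T)
    (hrep : ∀ t ∈ Set.Icc (0:ℝ) T, v t = v 0 + ∫ s in (0:ℝ)..t, v' s) :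
    (∀ t : ℝ, HasDerivAt uz ((∫ s in (0:ℝ)..T, ψ s) - ∫ s in (0:ℝ)..t, ψ s) t) ∧
    (∫ t in (0:ℝ)..T, ⟪(∫ s in (0:ℝ)..T, ψ s) - ∫ s in (0:ℝ)..t, ψ s, v' t⟫)
        + ⟪uz 0, v 0⟫
      = ∫ t in (0:ℝ)..T, ⟪ψ t, v t⟫ :=
  stmt_10_general T hT ψ hψ uz huz v v' hv'int hrep
end

section
/- Let $X, Y$ be Hilbert spaces and $F : \mathcal D(F) \subset X \to Y$ Gâteaux differentiable, satisfying the tangential cone condition with $c_{tc} < 1/2$ in a ball $B$ around a solution $x^\dagger$ of $F(x) = y$. Let $y^\delta$ satisfy $\|y^\delta - y\| \leq \delta$ and let $x_k \in B$ satisfy $\|F(x_k) - y^\delta\| > \tau \delta$ with $\tau > 2(1+c_{tc})/(1-2c_{tc})$. Then the Landweber step $x_{k+1} = x_k - \mu_k F'(x_k)^\star (F(x_k) - y^\delta)$ with $0 < \mu_k \leq 1/\|F'(x_k)\|^2$ satisfies $\|x_{k+1} - x^\dagger\|^2 - \|x_k - x^\dagger\|^2 \leq \mu_k \|F(x_k)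 - y^\delta\| \big( 2(1+c_{tc})\delta - (1 - 2c_{tc})\|F(x_k) - y^\delta\| \big) < 0$, i.e., the iteration is monotonically decreasing in the error. -/
open RealInnerProductSpace
set_option maxHeartbeats 1000000


/-- Monotonicity of the Landweber step under the discrepancy
principle. With the tangential cone condition (constant `c_tc < 1/2`) in a ball
`B` around a solution `x† ∈ B` of `F(x) = y`, noisy data `‖yδ - y‖ ≤ δ`,
`‖F(x_k) - yδ‖ > τ δ` with `τ > 2(1+c_tc)/(1-2c_tc)`, and stepsize
`0 < μ_k ≤ 1/‖F'(x_k)‖²`, the Landweber iterate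
`x_{k+1} = x_k - μ_k F'(x_k)⋆ (F(x_k) - yδ)` satisfies
`‖x_{k+1}-x†‖² - ‖x_k-x†‖²
   ≤ μ_k ‖F(x_k)-yδ‖ (2(1+c_tc)δ - (1-2c_tc)‖F(x_k)-yδ‖) < 0`. -/
theorem stmt_12
    {X Y : Type*} [NormedAddCommGroup X] [InnerProductSpace ℝ X] [CompleteSpace X]
    [NormedAddCommGroup Y] [InnerProductSpace ℝ Y] [CompleteSpace Y]
    (F : X → Y) (F' : X → (X →L[ℝ] Y))
    (xdag : X) (y : Y) (hsol : F xdag = y)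
    (ρ : ℝ) (hρ : 0 < ρ) (B : Set X) (hB : B = Metric.ball xdag ρ)
    (ctc : ℝ) (hc0 : 0 ≤ ctc) (hc : ctc < 1 / 2)
    (htc : ∀ x ∈ B, ∀ xt ∈ B,
      ‖F xt - F x - F' x (xt - x)‖ ≤ ctc * ‖F xt - F x‖)
    (yδ : Y) (δ : ℝ) (hδ : 0 ≤ δ) (hnoise : ‖yδ - y‖ ≤ δ)
    (τ : ℝ) (hτ : τ > 2 * (1 + ctc) / (1 - 2 * ctc))
    (xk : X) (hxk : xk ∈ B) (hdisc : ‖F xk - yδ‖ > τ * δ)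
    (μk : ℝ) (hμ0 : 0 < μk) (hμ : μk ≤ 1 / ‖F' xk‖ ^ 2) :
    ‖(xk - μk • ((F' xk).adjoint (F xk - yδ))) - xdag‖ ^ 2 - ‖xk - xdag‖ ^ 2
        ≤ μk * ‖F xk - yδ‖ * (2 * (1 + ctc) * δ - (1 - 2 * ctc) * ‖F xk - yδ‖) ∧
      μk * ‖F xk - yδ‖ * (2 * (1 + ctc) * δ - (1 - 2 * ctc) * ‖F xk - yδ‖) < 0 := by
  have h12 : 0 < 1 - 2 * ctc := by linarith
  set A := F' xk with hA
  set r := F xk - yδ with hr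
  have hxdagB : xdag ∈ B := by rw [hB]; exact Metric.mem_ball_self hρ
  have htc' := htc xk hxk xdag hxdagB
  set e := F xdag - F xk - A (xdag - xk) with he
  -- A (xk - xdag) = r + (yδ - y) + e
  have hAa : A (xk - xdag) = r + (yδ - y) + e := by
    have h1 : A (xk - xdag) = - A (xdag - xk) := by rw [← map_neg, neg_sub]
    rw [h1, he, hsol, hr]
    abel
  -- bound on ‖F xdag - F xk‖
  have hFd : ‖F xdag - F xk‖ ≤ ‖r‖ + δ := by
    have : F xdag - F xk = -r - (yδ - y) := by rw [hsol, hr]; abel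
    rw [this]
    calc ‖-r - (yδ - y)‖ ≤ ‖-r‖ + ‖yδ - y‖ := norm_sub_le _ _
      _ ≤ ‖r‖ + δ := by rw [norm_neg]; linarith
  have hrnn : (0:ℝ) ≤ ‖r‖ := norm_nonneg _
  have he' : ‖e‖ ≤ ctc * (‖r‖ + δ) := by
    refine le_trans htc' ?_
    exact mul_le_mul_of_nonneg_left hFd hc0
  -- inner product lower bound
  have hI : ⟪A (xk - xdag), r⟫ ≥ ‖r‖ ^ 2 - δ * ‖r‖ - ctc * (‖r‖ + δ) * ‖r‖ := by
    rw [hAa, inner_add_left, inner_add_left, real_inner_self_eq_norm_sq]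
    have h2 : ⟪yδ - y, r⟫ ≥ -(δ * ‖r‖) := by
      have := abs_real_inner_le_norm (yδ - y) r
      have hb : ‖yδ - y‖ * ‖r‖ ≤ δ * ‖r‖ := mul_le_mul_of_nonneg_right hnoise hrnn
      have := abs_le.mp this
      linarith [this.1]
    have h3 : ⟪e, r⟫ ≥ -(ctc * (‖r‖ + δ) * ‖r‖) := by
      have := abs_real_inner_le_norm e r
      have hb : ‖e‖ * ‖r‖ ≤ ctc * (‖r‖ + δ) * ‖r‖ := mul_le_mul_of_nonneg_right he' hrnn
      have := abs_le.mp this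
      linarith [this.1]
    linarith
  -- adjoint norm bound
  have hN : ‖(A.adjoint) r‖ ≤ ‖A‖ * ‖r‖ := by
    calc ‖(A.adjoint) r‖ ≤ ‖A.adjoint‖ * ‖r‖ := A.adjoint.le_opNorm r
      _ = ‖A‖ * ‖r‖ := by rw [LinearIsometryEquiv.norm_map (ContinuousLinearMap.adjoint (𝕜 := ℝ)) A]
  have hμA : μk * ‖A‖ ^ 2 ≤ 1 := by
    rcases eq_or_lt_of_le (sq_nonneg ‖A‖) with h | h
    · rw [← h]; norm_num
    · rw [← le_div_iff₀ h] at *; exact hμ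
  -- expansion
  have hexp : ‖(xk - μk • ((F' xk).adjoint (F xk - yδ))) - xdag‖ ^ 2
      = ‖xk - xdag‖ ^ 2 - 2 * (μk * ⟪A (xk - xdag), r⟫) + μk ^ 2 * ‖(A.adjoint) r‖ ^ 2 := by
    have h0 : (xk - μk • ((F' xk).adjoint (F xk - yδ))) - xdag
        = (xk - xdag) - μk • ((A.adjoint) r) := by rw [hA, hr]; abel
    rw [h0, norm_sub_sq_real, real_inner_smul_right, norm_smul]
    have : ⟪xk - xdag, (A.adjoint) r⟫ = ⟪A (xk - xdag), r⟫ :=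
      ContinuousLinearMap.adjoint_inner_right A (xk - xdag) r
    rw [this, mul_pow, Real.norm_eq_abs, sq_abs]
  -- second part first
  have hτpos : 0 < τ := lt_trans (div_pos (by linarith) h12) hτ
  have hrpos : 0 < ‖r‖ := lt_of_le_of_lt (mul_nonneg hτpos.le hδ) hdisc
  have hτ' : 2 * (1 + ctc) < τ * (1 - 2 * ctc) := by
    rw [gt_iff_lt, div_lt_iff₀ h12] at hτ; linarith
  have hkey : 2 * (1 + ctc) * δ - (1 - 2 * ctc) * ‖r‖ < 0 := by
    have a1 : 2 * (1 + ctc) * δ ≤ τ * (1 - 2 * ctc) * δ :=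
      mul_le_mul_of_nonneg_right hτ'.le hδ
    have a2 : (1 - 2 * ctc) * (τ * δ) < (1 - 2 * ctc) * ‖r‖ :=
      mul_lt_mul_of_pos_left hdisc h12
    nlinarith [a1, a2]
  constructor
  · rw [hexp]
    have hN2 : μk ^ 2 * ‖(A.adjoint) r‖ ^ 2 ≤ μk * ‖r‖ ^ 2 := by
      have h1 : ‖(A.adjoint) r‖ ^ 2 ≤ (‖A‖ * ‖r‖) ^ 2 :=
        pow_le_pow_left₀ (norm_nonneg _) hN 2
      have h2 : μk ^ 2 * ‖(A.adjoint) r‖ ^ 2 ≤ μk ^ 2 * (‖A‖ ^ 2 * ‖r‖ ^ 2) := by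
        nlinarith [sq_nonneg μk]
      have h3 : (μk * ‖A‖ ^ 2) * (μk * ‖r‖ ^ 2) ≤ 1 * (μk * ‖r‖ ^ 2) :=
        mul_le_mul_of_nonneg_right hμA (by positivity)
      nlinarith [h3]
    nlinarith [mul_le_mul_of_nonneg_left hI (le_of_lt hμ0)]
  · have : 0 < μk * ‖r‖ := mul_pos hμ0 hrpos
    exact mul_neg_of_pos_of_neg this hkey
end
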